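/- arXiv:1201.3575 — 2 statements merged into one kernel-verified Lean document; each statement's English description precedes it below -/
import Mathlib

section
/- The centralizer in SL(n+1,ℝ) of the matrix B = diag([[0,1],[-1,0]], -I_{n-1}) (n ≥ 2) is exactly the set of block-diagonal matrices diag([[α,β],[-β,α]], Ã) with (α,β) ≠ (0,0) and det(Ã)·(α²+β²) = 1. -/
open Matrix

noncomputable def sphMap {ι : Type*} [Fintype ι] [DecidableEq ι]
    (A : Matrix ι ι ℝ) (v : EuclideanSpace ℝ ι) : EuclideanSpace ℝ ι :=
  ‖Matrix.toEuclideanLin A v‖⁻¹ • Matrix.toEuclideanLin A v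

def Bmat (n : ℕ) : Matrix (Fin 2 ⊕ Fin (n - 1)) (Fin 2 ⊕ Fin (n - 1)) ℝ :=
  Matrix.fromBlocks !![0, 1; -1, 0] 0 0 (-1)

lemma Jsq : (!![0, 1; -1, 0] : Matrix (Fin 2) (Fin 2) ℝ) * !![0, 1; -1, 0] = -1 := by
  ext i j
  fin_cases i <;> fin_cases j <;>
    simp [Matrix.mul_apply, Fin.sum_univ_two, Matrix.one_apply]

/-- The centralizer of B in SL(n+1,ℝ) consists exactly of the block matrices
diag([[α,β],[-β,α]], At) with (α,β) ≠ (0,0) and det(At)·(α²+β²) = 1. -/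
theorem stmt7 (n : ℕ) (hn : 2 ≤ n)
    (A : Matrix (Fin 2 ⊕ Fin (n - 1)) (Fin 2 ⊕ Fin (n - 1)) ℝ) (hdet : A.det = 1) :
    A * Bmat n = Bmat n * A ↔
      ∃ (α β : ℝ) (At : Matrix (Fin (n - 1)) (Fin (n - 1)) ℝ),
        ¬(α = 0 ∧ β = 0) ∧ At.det * (α ^ 2 + β ^ 2) = 1 ∧
        A = Matrix.fromBlocks !![α, β; -β, α] 0 0 At := by
  constructor
  · intro h
    have hA : A = fromBlocks A.toBlocks₁₁ A.toBlocks₁₂ A.toBlocks₂₁ A.toBlocks₂₂ :=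
      (fromBlocks_toBlocks A).symm
    set A11 := A.toBlocks₁₁
    set A12 := A.toBlocks₁₂
    set A21 := A.toBlocks₂₁
    set A22 := A.toBlocks₂₂
    rw [hA, Bmat, fromBlocks_multiply, fromBlocks_multiply] at h
    have h11 : A11 * (!![0, 1; -1, 0] : Matrix (Fin 2) (Fin 2) ℝ) = (!![0, 1; -1, 0] : Matrix (Fin 2) (Fin 2) ℝ) * A11 := by
      have := congrArg Matrix.toBlocks₁₁ h
      simp only [Matrix.toBlocks_fromBlocks₁₁, Matrix.mul_zero, Matrix.zero_mul,
        add_zero, zero_add] at this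
      exact this
    have h12 : -A12 = (!![0, 1; -1, 0] : Matrix (Fin 2) (Fin 2) ℝ) * A12 := by
      have := congrArg Matrix.toBlocks₁₂ h
      simp only [Matrix.toBlocks_fromBlocks₁₂, Matrix.mul_zero, Matrix.zero_mul,
        add_zero, zero_add, Matrix.mul_neg, Matrix.mul_one] at this
      exact this
    have h21 : A21 * (!![0, 1; -1, 0] : Matrix (Fin 2) (Fin 2) ℝ) = -A21 := by
      have := congrArg Matrix.toBlocks₂₁ h
      simp only [Matrix.toBlocks_fromBlocks₂₁, Matrix.mul_zero, Matrix.zero_mul,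
        add_zero, zero_add, Matrix.neg_mul, Matrix.one_mul] at this
      exact this
    have hA12 : A12 = 0 := by
      have h1 : (!![0, 1; -1, 0] : Matrix (Fin 2) (Fin 2) ℝ) * ((!![0, 1; -1, 0] : Matrix (Fin 2) (Fin 2) ℝ) * A12) = (!![0, 1; -1, 0] : Matrix (Fin 2) (Fin 2) ℝ) * (-A12) :=
        congrArg ((!![0, 1; -1, 0] : Matrix (Fin 2) (Fin 2) ℝ) * ·) h12.symm
      rw [← Matrix.mul_assoc, Jsq, Matrix.neg_mul, Matrix.one_mul, Matrix.mul_neg, ← h12, neg_neg] at h1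
      ext i j
      have := congrFun (congrFun h1 i) j
      simp only [Matrix.neg_apply, Matrix.zero_apply] at this ⊢
      linarith
    have hA21 : A21 = 0 := by
      have h1 : (A21 * (!![0, 1; -1, 0] : Matrix (Fin 2) (Fin 2) ℝ)) * (!![0, 1; -1, 0] : Matrix (Fin 2) (Fin 2) ℝ) = (-A21) * (!![0, 1; -1, 0] : Matrix (Fin 2) (Fin 2) ℝ) := by
        rw [h21]
      rw [Matrix.mul_assoc, Jsq, Matrix.mul_neg, Matrix.mul_one, Matrix.neg_mul, h21, neg_neg] at h1
      ext i j
      have := congrFun (congrFun h1 i) j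
      simp only [Matrix.neg_apply, Matrix.zero_apply] at this ⊢
      linarith
    set α := A11 0 0 with hα
    set β := A11 0 1 with hβ
    have e10 : A11 1 0 = -β := by
      have := congrFun (congrFun h11 1 : _) 1
      simp [Matrix.mul_apply, Fin.sum_univ_two] at this
      linarith
    have e11 : A11 1 1 = α := by
      have := congrFun (congrFun h11 0 : _) 1
      simp [Matrix.mul_apply, Fin.sum_univ_two] at this
      linarith
    have hA11 : A11 = !![α, β; -β, α] := by
      rw [Matrix.eta_fin_two A11, e10, e11]
    have hAform : A = Matrix.fromBlocks !![α, β; -β, α] 0 0 A22 := by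
      rw [hA, hA11, hA12, hA21]
    have hdet' : A22.det * (α ^ 2 + β ^ 2) = 1 := by
      rw [hAform, Matrix.det_fromBlocks_zero₂₁] at hdet
      rw [Matrix.det_fin_two_of] at hdet
      nlinarith [hdet]
    refine ⟨α, β, A22, ?_, hdet', hAform⟩
    rintro ⟨h0, h1⟩
    rw [h0, h1] at hdet'
    norm_num at hdet'
  · rintro ⟨α, β, At, -, -, rfl⟩
    rw [Bmat, fromBlocks_multiply, fromBlocks_multiply]
    have hcomm : !![α, β; -β, α] * (!![0, 1; -1, 0] : Matrix (Fin 2) (Fin 2) ℝ) = (!![0, 1; -1, 0] : Matrix (Fin 2) (Fin 2) ℝ) * !![α, β; -β, α] := by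
      ext i j
      fin_cases i <;> fin_cases j <;>
        simp [Matrix.mul_apply, Fin.sum_univ_two] <;> ring
    simp only [Matrix.mul_zero, Matrix.zero_mul, Matrix.mul_neg, Matrix.neg_mul, Matrix.mul_one, Matrix.one_mul,
      add_zero, zero_add, neg_zero]
    rw [hcomm]
end

section
/- Let t ↦ A_t be a one-parameter group of matrices in GL(n+1,ℝ) (continuous homomorphism from ℝ), and suppose each induced spherical map a_t(v) = A_t v/‖A_t v‖ commutes with b(v) = Bv for a fixed orthogonal matrix B with no eigenvalue 1. Then for each t there is ε_t ∈ {+1, -1} with B A_t = ε_t A_t B after rescaling A_t to determinant ±1; in particular it follows that (up to sign) A_t commutes with B. -/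
/-!
The commutation of the spherical maps says that `A_t B v` and `B A_t v` point in the same
direction for every unit vector `v`, hence for every `v`. A linear map sending every vector to a
nonnegative multiple of itself is a nonnegative homothety `c • 1`, so `(A_t B)⁻¹ B A_t = c • 1`
with `c ≥ 0`, and comparing determinants gives `c ^ (n + 1) = 1`, i.e. `c = 1`. Hence
`B A_t = A_t B`, and the sign can always be taken to be `+1`.
-/

open Matrix

namespace LinearMap

variable {K V : Type*} [Field K] [LinearOrder K] [IsStrictOrderedRing K]
  [AddCommGroup V] [Module K V] [FiniteDimensional K V]

theorem eq_one_of_forall_sameRay_of_det_eq_one {f : V →ₗ[K] V}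
    (hray : ∀ v, SameRay K v (f v)) (hdet : f.det = 1) : f = 1 := by
  obtain ⟨a, rfl⟩ := exists_eq_smul_id_of_forall_notLinearIndependent fun v ↦
    sameRay_or_sameRay_neg_iff_not_linearIndependent.mp (.inl (hray v))
  rcases subsingleton_or_nontrivial V with hV | hV
  · exact Subsingleton.elim _ _
  obtain ⟨v, hv⟩ := exists_ne (0 : V)
  have ha : 0 ≤ a := by
    simpa [hv] using sameRay_smul_right_iff.mp (hray v)
  rw [Module.End.one_eq_id, det_smul, det_id, mul_one,
    pow_eq_one_iff_of_nonneg ha Module.finrank_pos.ne'] at hdet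
  rw [hdet, one_smul]

theorem eq_of_forall_sameRay_of_det_eq {f g : V →ₗ[K] V}
    (hray : ∀ v, SameRay K (f v) (g v)) (hdet : f.det = g.det) (hf : f.det ≠ 0) :
    f = g := by
  obtain ⟨u, rfl⟩ := (isUnit_iff_isUnit_det f).mpr hf.isUnit
  refine (Units.inv_mul_eq_one.mp <| eq_one_of_forall_sameRay_of_det_eq_one (fun v ↦ ?_) ?_)
  · simpa [← Module.End.mul_apply] using (hray v).map (↑u⁻¹ : V →ₗ[K] V)
  · rw [map_mul, ← hdet, ← map_mul, Units.inv_mul, map_one]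

end LinearMap

theorem LinearMap.sameRay_of_forall_norm_eq_one {E F : Type*} [NormedAddCommGroup E] [NormedSpace ℝ E]
    [AddCommGroup F] [Module ℝ F] {f g : E →ₗ[ℝ] F}
    (h : ∀ v, ‖v‖ = 1 → SameRay ℝ (f v) (g v)) (v : E) : SameRay ℝ (f v) (g v) := by
  rcases eq_or_ne v 0 with rfl | hv
  · simp
  have hnorm : ‖v‖ ≠ 0 := norm_ne_zero_iff.mpr hv
  simpa [smul_smul, hnorm] using (h (‖v‖⁻¹ • v) (norm_smul_inv_norm hv)).smul ‖v‖

theorem sameRay_mul_of_sphMap_comm {ι : Type*} [Fintype ι] [DecidableEq ι]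
    {A B : Matrix ι ι ℝ} {v : EuclideanSpace ℝ ι}
    (h : sphMap A (toEuclideanLin B v) = toEuclideanLin B (sphMap A v)) :
    SameRay ℝ (toEuclideanLin (A * B) v) (toEuclideanLin (B * A) v) := by
  simp only [sphMap, map_smul, toLpLin_mul_same, LinearMap.comp_apply] at h ⊢
  rcases eq_or_ne (toEuclideanLin A v) 0 with hAv | hAv
  · simp [hAv]
  rcases eq_or_ne (toEuclideanLin A (toEuclideanLin B v)) 0 with hABv | hABv
  · simp [hABv]
  exact .inr <| .inr ⟨_, _, inv_pos.mpr (norm_pos_iff.mpr hABv),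
    inv_pos.mpr (norm_pos_iff.mpr hAv), h⟩

theorem stmt17_general (n : ℕ) (A : ℝ → Matrix (Fin (n + 1)) (Fin (n + 1)) ℝ)
    (B : Matrix (Fin (n + 1)) (Fin (n + 1)) ℝ)
    (hinv : ∀ t, IsUnit (A t).det)
    (hBorth : Bᵀ * B = 1)
    (hcomm : ∀ t : ℝ, ∀ v : EuclideanSpace ℝ (Fin (n + 1)), ‖v‖ = 1 →
      sphMap (A t) (Matrix.toEuclideanLin B v) =
        Matrix.toEuclideanLin B (sphMap (A t) v)) :
    ∀ t : ℝ, ∃ ε : ℝ, (ε = 1 ∨ ε = -1) ∧ B * A t = ε • (A t * B) := by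
  intro t
  refine ⟨1, .inl rfl, ?_⟩
  have hB : IsUnit B.det := isUnit_det_of_left_inverse hBorth
  have hray : ∀ v, SameRay ℝ (toEuclideanLin (A t * B) v) (toEuclideanLin (B * A t) v) :=
    LinearMap.sameRay_of_forall_norm_eq_one fun v hv ↦ sameRay_mul_of_sphMap_comm (hcomm t v hv)
  have hdet : (A t * B).det ≠ 0 := by
    rw [det_mul]
    exact ((hinv t).mul hB).ne_zero
  rw [one_smul, toEuclideanLin.injective <| LinearMap.eq_of_forall_sameRay_of_det_eq hray
    (by simp [mul_comm]) (by simpa using hdet)]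

/-- If a one-parameter group of matrices of determinant ±1 induces spherical
maps commuting with b(v) = Bv (B orthogonal, no eigenvalue 1), then each A t
commutes with B up to sign. -/
theorem stmt17 (n : ℕ) (A : ℝ → Matrix (Fin (n + 1)) (Fin (n + 1)) ℝ)
    (B : Matrix (Fin (n + 1)) (Fin (n + 1)) ℝ)
    (hhom : ∀ s t : ℝ, A (s + t) = A s * A t) (hA0 : A 0 = 1) (hcont : Continuous A)
    (hinv : ∀ t, IsUnit (A t).det)
    (hdet : ∀ t, (A t).det = 1 ∨ (A t).det = -1)
    (hBorth : Bᵀ * B = 1)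
    (hBeig : ∀ v : Fin (n + 1) → ℝ, v ≠ 0 → B.mulVec v ≠ v)
    (hcomm : ∀ t : ℝ, ∀ v : EuclideanSpace ℝ (Fin (n + 1)), ‖v‖ = 1 →
      sphMap (A t) (Matrix.toEuclideanLin B v) =
        Matrix.toEuclideanLin B (sphMap (A t) v)) :
    ∀ t : ℝ, ∃ ε : ℝ, (ε = 1 ∨ ε = -1) ∧ B * A t = ε • (A t * B) :=
  stmt17_general n A B hinv hBorth hcomm
end
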